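/- In a loopless digraph with exactly one Eulerian tour up to cyclic shift, no two distinct simple oriented cycles have an edge in common. -/

import Mathlib

/-- The list of directed edges traversed by the cyclic sequence of vertices `l`
(consecutive pairs, including the closing pair from the last to the first vertex). -/
def cyclicPairs {V : Type*} (l : List V) : List (V × V) := l.zip (l.rotate 1)

/-- `l` is an Eulerian tour of the digraph with edge set `E`: the cyclically consecutive
pairs of `l` are pairwise distinct and are exactly the edges of `E`. -/
def IsEulerTour {V : Type*} [DecidableEq V] (E : Finset (V × V)) (l : List V) : Prop :=
  l ≠ [] ∧ (cyclicPairs l).Nodup ∧ (cyclicPairs l).toFinset = E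

/-- The digraph with edge set `E` has exactly one Eulerian tour up to cyclic shift. -/
def UniqueEulerTour {V : Type*} [DecidableEq V] (E : Finset (V × V)) : Prop :=
  ∃ l, IsEulerTour E l ∧ ∀ l', IsEulerTour E l' → l'.IsRotated l

def Loopless {V : Type*} (E : Finset (V × V)) : Prop := ∀ e ∈ E, e.1 ≠ e.2

def NoIsolated {V : Type*} (E : Finset (V × V)) : Prop :=
  ∀ v : V, ∃ e ∈ E, e.1 = v ∨ e.2 = v

def outdeg {V : Type*} [DecidableEq V] (E : Finset (V × V)) (v : V) : ℕ :=
  (E.filter (fun p => p.1 = v)).card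

def indeg {V : Type*} [DecidableEq V] (E : Finset (V × V)) (v : V) : ℕ :=
  (E.filter (fun p => p.2 = v)).card

/-- `l` is an oriented simple path from `u` to `v` using edges of `E`. -/
def IsPathIn {V : Type*} (E : Finset (V × V)) (u v : V) (l : List V) : Prop :=
  l.Chain' (fun a b => (a, b) ∈ E) ∧ l.head? = some u ∧ l.getLast? = some v ∧ l.Nodup

/-- `l` (read cyclically) is a simple oriented cycle of the digraph `E`. -/
def IsSimpleCycleList {V : Type*} (E : Finset (V × V)) (l : List V) : Prop :=
  l ≠ [] ∧ l.Nodup ∧ ∀ p ∈ cyclicPairs l, p ∈ E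

/-!
If `c₁` and `c₂` leave every common vertex along the same edge, then following `c₁` from the
shared edge never leaves `c₂` and vice versa, so the edge sets agree. Otherwise they leave a
common vertex `x` along different edges, and the Euler tour splits at `x` into two closed walks
`x A` and `x B` beginning with these edges. Then `A` and `B` have no vertex `y` in common: exchanging
the two segments from `y` back to `x` would give a second Euler tour that is not a rotation of the
first. So a simple cycle leaving `x` into one of the walks can never switch to the other one, and
`c₁`, `c₂` lie in the edge-disjoint walks `x A` and `x B`, contradicting their common edge.
-/

section

open List

theorem List.Nodup.rotate_eq_self_of_head?_eq {X : Type*} {l : List X} (hl : l.Nodup) {n : ℕ}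
    (h : (l.rotate n).head? = l.head?) : l.rotate n = l := by
  rcases eq_or_ne l [] with rfl | hne
  · simp
  have hpos : 0 < l.length := length_pos_iff.2 hne
  rw [← rotate_mod, head?_rotate (Nat.mod_lt _ hpos), head?_eq_getElem?,
    getElem?_eq_getElem (Nat.mod_lt _ hpos), getElem?_eq_getElem hpos, Option.some_inj,
    hl.getElem_inj_iff] at h
  rw [← rotate_mod, h, rotate_zero]

theorem List.Nodup.not_isRotated_append_swap {X : Type*} {α β γ δ : List X}
    (hnd : (α ++ (β ++ (γ ++ δ))).Nodup) (hα : α ≠ []) (hβ : β ≠ []) (hδ : δ ≠ []) :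
    ¬ (α ++ (δ ++ (γ ++ β))) ~r (α ++ (β ++ (γ ++ δ))) := by
  intro hrot
  obtain ⟨n, hn⟩ := hrot.symm
  have hsame_head : ((α ++ (β ++ (γ ++ δ))).rotate n).head? = (α ++ (β ++ (γ ++ δ))).head? := by
    rw [hn, head?_append_of_ne_nil _ hα, head?_append_of_ne_nil _ hα]
  have heq := hnd.rotate_eq_self_of_head?_eq hsame_head
  rw [hn] at heq
  have hδβ := congrArg head? (append_cancel_left heq)
  rw [head?_append_of_ne_nil _ hδ, head?_append_of_ne_nil _ hβ, head?_eq_some_head hβ,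
    head?_eq_some_head hδ, Option.some_inj] at hδβ
  exact disjoint_of_nodup_append (nodup_append.1 hnd).2.1 (head_mem hβ)
    (mem_append_right γ (hδβ ▸ head_mem hδ))

variable {V : Type*}

/-- The edges of the walk through the vertices of `t`, followed by one more step to `y`. -/
def walkPairs : List V → V → List (V × V)
  | [], _ => []
  | a :: t, y => (a, t.headD y) :: walkPairs t y

theorem walkPairs_cons_append_cons (a b : V) (p q : List V) (y : V) :
    walkPairs (a :: (p ++ b :: q)) y = walkPairs (a :: p) b ++ walkPairs (b :: q) y := by
  induction p generalizing a with
  | nil => simp [walkPairs]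
  | cons c p ih => simp [walkPairs, ih]

theorem exists_eq_append_cons_of_mem_walkPairs {t : List V} {y : V} {g : V × V}
    (hg : g ∈ walkPairs t y) : ∃ A B, t = A ++ g.1 :: B ∧ g.2 = B.headD y := by
  induction t with
  | nil => simp [walkPairs] at hg
  | cons a t ih =>
    rcases mem_cons.1 hg with rfl | hg
    · exact ⟨[], t, rfl, rfl⟩
    · obtain ⟨A, B, rfl, h⟩ := ih hg
      exact ⟨a :: A, B, rfl, h⟩

theorem forall_mem_of_walkPairs {p : V → Prop} {a y : V} {t : List V}
    (hstep : ∀ g ∈ walkPairs (a :: t) y, p g.1 → p g.2) (ha : p a) : ∀ v ∈ a :: t, p v := by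
  induction t generalizing a with
  | nil => simpa using ha
  | cons b t ih =>
    have hb : p b := hstep (a, b) (mem_cons_self ..) ha
    have hrest := ih (fun g hg => hstep g (mem_cons_of_mem _ hg)) hb
    exact forall_mem_cons.2 ⟨ha, hrest⟩

theorem cyclicPairs_cons (x : V) (t : List V) : cyclicPairs (x :: t) = walkPairs (x :: t) x := by
  have zip_eq : ∀ (a : V) (t : List V), (a :: t).zip (t ++ [x]) = walkPairs (a :: t) x := by
    intro a t
    induction t generalizing a with
    | nil => rfl
    | cons b t ih => rw [cons_append, zip_cons_cons, ih]; rfl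
  simp only [cyclicPairs, rotate_cons_succ, rotate_zero, zip_eq]

theorem cyclicPairs_cons_append_cons (x : V) (A B : List V) :
    cyclicPairs (x :: A ++ x :: B) = cyclicPairs (x :: A) ++ cyclicPairs (x :: B) := by
  simp only [cons_append, cyclicPairs_cons, walkPairs_cons_append_cons]

theorem cyclicPairs_rotate (l : List V) (n : ℕ) :
    cyclicPairs (l.rotate n) = (cyclicPairs l).rotate n := by
  rw [cyclicPairs, cyclicPairs, zip_eq_zipWith, zip_eq_zipWith,
    zipWith_rotate_distrib _ _ _ _ (length_rotate ..).symm, rotate_rotate, rotate_rotate,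
    Nat.add_comm]

theorem List.IsRotated.cyclicPairs {l l' : List V} (h : l ~r l') :
    _root_.cyclicPairs l ~r _root_.cyclicPairs l' := by
  obtain ⟨n, rfl⟩ := h
  exact ⟨n, (cyclicPairs_rotate l n).symm⟩

theorem mem_of_mem_cyclicPairs {l : List V} {g : V × V} (hg : g ∈ cyclicPairs l) :
    g.1 ∈ l ∧ g.2 ∈ l :=
  (of_mem_zip hg).imp_right (mem_rotate.1)

theorem exists_mem_cyclicPairs_fst_eq {l : List V} {v : V} (hv : v ∈ l) :
    ∃ g ∈ cyclicPairs l, g.1 = v := by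
  have hfst : (cyclicPairs l).map Prod.fst = l := map_fst_zip (by simp)
  rw [← hfst] at hv
  exact mem_map.1 hv

theorem eq_of_mem_cyclicPairs_of_fst_eq {l : List V} (hl : l.Nodup) {g g' : V × V}
    (hg : g ∈ cyclicPairs l) (hg' : g' ∈ cyclicPairs l) (h : g.1 = g'.1) : g = g' := by
  have hfst : ((cyclicPairs l).map Prod.fst).Nodup := by
    rwa [cyclicPairs, map_fst_zip (by simp)]
  exact inj_on_of_nodup_map hfst hg hg' h

theorem forall_mem_of_cyclicPairs {l : List V} {p : V → Prop}
    (hstep : ∀ g ∈ cyclicPairs l, p g.1 → p g.2) {a : V} (ha : a ∈ l) (hpa : p a) :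
    ∀ v ∈ l, p v := by
  obtain ⟨s, t, rfl⟩ := append_of_mem ha
  have hrot : (a :: t ++ s) ~r (s ++ a :: t) := isRotated_append
  intro v hv
  rw [← hrot.mem_iff, cons_append] at hv
  refine forall_mem_of_walkPairs (y := a) (fun g hg => hstep g ?_) hpa v hv
  rw [← cyclicPairs_cons] at hg
  exact hrot.cyclicPairs.mem_iff.1 hg

theorem cyclicPairs_subset_of_forall_fst_mem {c M : List V}
    (hstep : ∀ g ∈ cyclicPairs c, g.1 ∈ M → g ∈ cyclicPairs M) {a : V} (ha : a ∈ c)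
    (haM : a ∈ M) : cyclicPairs c ⊆ cyclicPairs M := by
  have hcM : ∀ v ∈ c, v ∈ M := forall_mem_of_cyclicPairs
    (fun g hg hg₁ => (mem_of_mem_cyclicPairs (hstep g hg hg₁)).2) ha haM
  exact fun g hg => hstep g hg (hcM _ (mem_of_mem_cyclicPairs hg).1)

theorem cyclicPairs_subset_of_forall_fst_eq {c₁ c₂ : List V}
    (hag : ∀ g₁ ∈ cyclicPairs c₁, ∀ g₂ ∈ cyclicPairs c₂, g₁.1 = g₂.1 → g₁ = g₂)
    {e : V × V} (he₁ : e ∈ cyclicPairs c₁) (he₂ : e ∈ cyclicPairs c₂) :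
    cyclicPairs c₁ ⊆ cyclicPairs c₂ := by
  refine cyclicPairs_subset_of_forall_fst_mem (fun g hg hg₁ => ?_)
    (mem_of_mem_cyclicPairs he₁).1 (mem_of_mem_cyclicPairs he₂).1
  obtain ⟨g₂, hg₂, hfst⟩ := exists_mem_cyclicPairs_fst_eq hg₁
  rwa [hag g hg g₂ hg₂ hfst.symm]

theorem exists_cons_isRotated_of_mem_cyclicPairs {l : List V} {g : V × V}
    (hg : g ∈ cyclicPairs l) : ∃ t, (g.1 :: t) ~r l ∧ g.2 = t.headD g.1 := by
  cases l with
  | nil => simp [cyclicPairs] at hg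
  | cons a s =>
    rw [cyclicPairs_cons, walkPairs] at hg
    rcases mem_cons.1 hg with rfl | hg
    · exact ⟨s, IsRotated.refl _, rfl⟩
    · obtain ⟨A, B, rfl, hB⟩ := exists_eq_append_cons_of_mem_walkPairs hg
      refine ⟨B ++ a :: A, isRotated_append (l := g.1 :: B) (l' := a :: A), ?_⟩
      cases B <;> simp [hB]

theorem exists_isRotated_cons_append_cons {l : List V} {f₁ f₂ : V × V}
    (hf₁ : f₁ ∈ cyclicPairs l) (hf₂ : f₂ ∈ cyclicPairs l) (hx : f₁.1 = f₂.1) (hne : f₁ ≠ f₂) :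
    ∃ A B, (f₁.1 :: A ++ f₁.1 :: B) ~r l ∧
      f₁ ∈ cyclicPairs (f₁.1 :: A) ∧ f₂ ∈ cyclicPairs (f₁.1 :: B) := by
  obtain ⟨t, hrot, hf₁t⟩ := exists_cons_isRotated_of_mem_cyclicPairs hf₁
  have hf₂t : f₂ ∈ walkPairs t f₁.1 := by
    rw [← hrot.cyclicPairs.mem_iff, cyclicPairs_cons, walkPairs] at hf₂
    refine (mem_cons.1 hf₂).resolve_left fun h => hne ?_
    rw [h, ← hf₁t]
  obtain ⟨A, B, rfl, hB⟩ := exists_eq_append_cons_of_mem_walkPairs hf₂t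
  rw [← hx] at hrot hf₁t
  refine ⟨A, B, hrot, ?_, ?_⟩
  · cases A <;> simp [cyclicPairs_cons, walkPairs, hf₁t, Prod.ext_iff]
  · rw [cyclicPairs_cons, walkPairs]
    exact mem_cons.2 (Or.inl (Prod.ext hx.symm hB))

section EulerTour

variable [DecidableEq V] {E : Finset (V × V)}

theorem IsEulerTour.of_perm {l l' : List V} (h : IsEulerTour E l) (hl' : l' ≠ [])
    (hp : (cyclicPairs l').Perm (cyclicPairs l)) : IsEulerTour E l' :=
  ⟨hl', hp.nodup_iff.2 h.2.1, (toFinset_eq_of_perm _ _ hp).trans h.2.2⟩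

theorem IsEulerTour.mem_cyclicPairs {l : List V} (h : IsEulerTour E l) {g : V × V}
    (hg : g ∈ E) : g ∈ cyclicPairs l := by
  rwa [← mem_toFinset, h.2.2]

theorem IsEulerTour.isRotated {l l' : List V} (h : IsEulerTour E l) (hr : l ~r l') :
    IsEulerTour E l' :=
  h.of_perm (fun hl' => h.1 (isRotated_nil_iff.1 (hl' ▸ hr))) hr.symm.cyclicPairs.perm

theorem UniqueEulerTour.isRotated (hu : UniqueEulerTour E) {l l' : List V}
    (h : IsEulerTour E l) (h' : IsEulerTour E l') : l ~r l' := by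
  obtain ⟨l₀, -, hl₀⟩ := hu
  exact (hl₀ l h).trans (hl₀ l' h').symm

theorem UniqueEulerTour.disjoint_of_isEulerTour (hu : UniqueEulerTour E) {x : V}
    {A B : List V} (ht : IsEulerTour E (x :: A ++ x :: B)) : A.Disjoint B := by
  intro y hyA hyB
  obtain ⟨A₁, A₂, rfl⟩ := append_of_mem hyA
  obtain ⟨B₁, B₂, rfl⟩ := append_of_mem hyB
  have hsplit : ∀ P Q R S : List V, cyclicPairs (x :: (P ++ y :: Q) ++ x :: (R ++ y :: S)) =
      walkPairs (x :: P) y ++ (walkPairs (y :: Q) x ++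
        (walkPairs (x :: R) y ++ walkPairs (y :: S) x)) := by
    intro P Q R S
    simp only [cons_append, append_assoc, cyclicPairs_cons, walkPairs_cons_append_cons]
  have hswap : IsEulerTour E (x :: (A₁ ++ y :: B₂) ++ x :: (B₁ ++ y :: A₂)) := by
    refine ht.of_perm (cons_ne_nil _ _) ?_
    rw [hsplit, hsplit]
    exact perm_iff_count.2 fun a => by simp only [count_append]; omega
  have hnd := ht.2.1
  have hrot := (hu.isRotated hswap ht).cyclicPairs
  rw [hsplit] at hnd
  rw [hsplit, hsplit] at hrot
  exact hnd.not_isRotated_append_swap (by simp [walkPairs]) (by simp [walkPairs])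
    (by simp [walkPairs]) hrot

theorem UniqueEulerTour.cyclicPairs_subset_of_isEulerTour (hu : UniqueEulerTour E) {x : V}
    {A B : List V} (ht : IsEulerTour E (x :: A ++ x :: B)) {c : List V}
    (hc : IsSimpleCycleList E c) {f : V × V} (hf : f ∈ cyclicPairs c) (hfx : f.1 = x)
    (hfA : f ∈ cyclicPairs (x :: A)) : cyclicPairs c ⊆ cyclicPairs (x :: A) := by
  refine cyclicPairs_subset_of_forall_fst_mem (fun g hg hgA => ?_)
    (hfx ▸ (mem_of_mem_cyclicPairs hf).1) (mem_cons_self ..)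
  rcases eq_or_ne g.1 x with hgx | hgx
  · rwa [eq_of_mem_cyclicPairs_of_fst_eq hc.2.1 hg hf (hgx.trans hfx.symm)]
  have hgE : g ∈ cyclicPairs (x :: A) ++ cyclicPairs (x :: B) := by
    rw [← cyclicPairs_cons_append_cons]
    exact ht.mem_cyclicPairs (hc.2.2 g hg)
  refine (mem_append.1 hgE).resolve_right fun hgB => ?_
  exact hu.disjoint_of_isEulerTour ht ((mem_cons.1 hgA).resolve_left hgx)
    ((mem_cons.1 (mem_of_mem_cyclicPairs hgB).1).resolve_left hgx)

end EulerTour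

end

theorem unique_euler_cycles_edge_disjoint_general {V : Type*} [DecidableEq V]
    (E : Finset (V × V)) (huniq : UniqueEulerTour E)
    (c₁ c₂ : List V) (h₁ : IsSimpleCycleList E c₁) (h₂ : IsSimpleCycleList E c₂)
    (e : V × V) (he₁ : e ∈ cyclicPairs c₁) (he₂ : e ∈ cyclicPairs c₂) :
    (cyclicPairs c₁).toFinset = (cyclicPairs c₂).toFinset := by
  by_cases hag : ∀ g₁ ∈ cyclicPairs c₁, ∀ g₂ ∈ cyclicPairs c₂, g₁.1 = g₂.1 → g₁ = g₂
  · have h₁₂ := cyclicPairs_subset_of_forall_fst_eq hag he₁ he₂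
    have h₂₁ := cyclicPairs_subset_of_forall_fst_eq
      (fun g₂ hg₂ g₁ hg₁ h => (hag g₁ hg₁ g₂ hg₂ h.symm).symm) he₂ he₁
    ext g
    simp only [List.mem_toFinset]
    exact ⟨@h₁₂ g, @h₂₁ g⟩
  push Not at hag
  obtain ⟨f₁, hf₁, f₂, hf₂, hx, hne⟩ := hag
  obtain ⟨l, hl, -⟩ := id huniq
  obtain ⟨A, B, hrot, hf₁A, hf₂B⟩ := exists_isRotated_cons_append_cons
    (hl.mem_cyclicPairs (h₁.2.2 f₁ hf₁)) (hl.mem_cyclicPairs (h₂.2.2 f₂ hf₂)) hx hne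
  have htAB := hl.isRotated hrot.symm
  have htBA := htAB.isRotated List.isRotated_append
  have heA := huniq.cyclicPairs_subset_of_isEulerTour htAB h₁ hf₁ rfl hf₁A he₁
  have heB := huniq.cyclicPairs_subset_of_isEulerTour htBA h₂ hf₂ hx.symm hf₂B he₂
  have hnd := htAB.2.1
  rw [cyclicPairs_cons_append_cons] at hnd
  exact (List.disjoint_of_nodup_append hnd heA heB).elim

/-- In a loopless digraph with exactly one Eulerian tour up to cyclic shift, no two
distinct simple oriented cycles have an edge in common. -/
theorem unique_euler_cycles_edge_disjoint {V : Type*} [DecidableEq V]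
    (E : Finset (V × V)) (hloop : Loopless E) (huniq : UniqueEulerTour E)
    (c₁ c₂ : List V) (h₁ : IsSimpleCycleList E c₁) (h₂ : IsSimpleCycleList E c₂)
    (e : V × V) (he₁ : e ∈ cyclicPairs c₁) (he₂ : e ∈ cyclicPairs c₂) :
    (cyclicPairs c₁).toFinset = (cyclicPairs c₂).toFinset :=
  unique_euler_cycles_edge_disjoint_general E huniq c₁ c₂ h₁ h₂ e he₁ he₂
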